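/- If ω is a computable infinite binary sequence containing infinitely many zeroes and infinitely many ones, then the only interval forecast I such that the stationary forecasting system Γ_I makes ω computably random is I = [0,1]. -/

import Mathlib

/-- Expectation of a gamble `f : Bool → ℝ` under a precise forecast `p`. -/
noncomputable def pexp (p : ℝ) (f : Bool → ℝ) : ℝ := p * f true + (1 - p) * f false

/-- Upper expectation associated with the interval forecast `[a, b]`. -/
noncomputable def uexp (a b : ℝ) (f : Bool → ℝ) : ℝ :=
  sSup ((fun p => pexp p f) '' Set.Icc a b)

/-- `M` is a supermartingale for the forecasting system with bounds `lo`, `hi`: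
every difference `ΔM(s)` has non-positive upper expectation. -/
def IsSupermartingale (lo hi : List Bool → ℝ) (M : List Bool → ℝ) : Prop :=
  ∀ s, uexp (lo s) (hi s) (fun x => M (s ++ [x]) - M s) ≤ 0

/-- A test supermartingale: a non-negative supermartingale with initial value 1. -/
def IsTestSupermartingale (lo hi : List Bool → ℝ) (M : List Bool → ℝ) : Prop :=
  M [] = 1 ∧ (∀ s, 0 ≤ M s) ∧ IsSupermartingale lo hi M

/-- A real process is computable if some computable net of rationals converges to it
with a computable modulus of convergence. -/
def ComputableProcess (F : List Bool → ℝ) : Prop :=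
  ∃ (r : List Bool → ℕ → ℚ) (e : List Bool → ℕ → ℕ),
    Computable (fun p : List Bool × ℕ => r p.1 p.2) ∧
    Computable (fun p : List Bool × ℕ => e p.1 p.2) ∧
    ∀ s N n, e s N ≤ n → |(r s n : ℝ) - F s| ≤ (2 : ℝ) ^ (-(N : ℤ))

/-- The initial segment `ω^n = (ω_1, …, ω_n)` of an infinite binary sequence. -/
def prefixOf (ω : ℕ → Bool) (n : ℕ) : List Bool := List.ofFn fun i : Fin n => ω i

/-- `ω` is computably random for the forecasting system with bounds `lo`, `hi` if every
computable test supermartingale remains bounded above on the initial segments of `ω`. -/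
def ComputablyRandom (lo hi : List Bool → ℝ) (ω : ℕ → Bool) : Prop :=
  ∀ T : List Bool → ℝ, IsTestSupermartingale lo hi T → ComputableProcess T →
    ∃ B : ℝ, ∀ n, T (prefixOf ω n) ≤ B

/-!
If `[a, b] ≠ [0, 1]`, then `0 < a` or `b < 1`, so some outcome `t` has upper probability
`u < 1` under every forecast in `[a, b]`. The positions where `ω` equals `t` form an infinite
computable set. A gambler who bets all his capital on `t` exactly at those positions, at odds
`q ∈ (1, 1/u]`, has a computable test supermartingale that is multiplied by `q` at each of them
along `ω`, hence unbounded. Conversely, under the vacuous forecast `[0, 1]` a supermartingale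
cannot increase along any path, so every test supermartingale stays below `1` on `ω`.
-/

open Encodable Set

theorem Int.natAbs_eq_encode (z : ℤ) : z.natAbs = (encode z + 1) / 2 := by
  cases z with
  | ofNat n => show n = (2 * n + 1) / 2; omega
  | negSucc n => show n + 1 = (2 * n + 1 + 1) / 2; omega

theorem Rat.encode_eq_pair (q : ℚ) : encode q = Nat.pair (encode q.num) q.den := rfl

theorem Rat.mem_range_encode_iff (k : ℕ) :
    k ∈ range (encode : ℚ → ℕ) ↔ 0 < k.unpair.2 ∧ ((k.unpair.1 + 1) / 2).Coprime k.unpair.2 := by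
  constructor
  · rintro ⟨q, rfl⟩
    rw [Rat.encode_eq_pair, Nat.unpair_pair, ← Int.natAbs_eq_encode]
    exact ⟨q.pos, q.reduced⟩
  · rintro ⟨hd, hc⟩
    set z := Denumerable.ofNat ℤ k.unpair.1
    have hz : encode z = k.unpair.1 := Denumerable.encode_ofNat _
    refine ⟨⟨z, k.unpair.2, hd.ne', by rwa [Int.natAbs_eq_encode, hz]⟩, ?_⟩
    rw [Rat.encode_eq_pair]
    simp only [hz, Nat.pair_unpair]

namespace Primrec

private def euclidStep (p : ℕ × ℕ) : ℕ × ℕ := if p.1 = 0 then p else (p.2 % p.1, p.1)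

private theorem euclidStep_iterate {a n : ℕ} (b : ℕ) (h : a ≤ n) :
    euclidStep^[n] (a, b) = (0, Nat.gcd a b) := by
  induction a using Nat.strong_induction_on generalizing n b with
  | _ a ih =>
  rcases Nat.eq_zero_or_pos a with rfl | ha
  · rw [Nat.gcd_zero_left]
    exact Function.iterate_fixed (f := euclidStep) (by simp [euclidStep]) n
  · obtain ⟨n, rfl⟩ := Nat.exists_eq_add_of_le' (ha.trans_le h)
    have hlt := Nat.mod_lt b ha
    rw [Function.iterate_succ_apply, euclidStep, if_neg ha.ne', ih _ hlt a (by omega),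
      ← Nat.gcd_rec]

theorem nat_gcd : Primrec₂ Nat.gcd :=
  have hstep : Primrec euclidStep :=
    ite (Primrec.eq.comp fst (const 0)) .id (pair (nat_mod.comp snd fst) fst)
  (snd.comp (nat_iterate fst .id (hstep.comp snd).to₂)).of_eq fun p =>
    congrArg Prod.snd (euclidStep_iterate p.2 le_rfl)

theorem nat_pow : Primrec₂ ((· ^ ·) : ℕ → ℕ → ℕ) :=
  (nat_iterate snd (const 1) (nat_mul.comp (fst.comp fst) snd).to₂).of_eq fun p =>
    mul_left_iterate_apply_one p.1

theorem int_natCast : Primrec (Nat.cast : ℕ → ℤ) :=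
  encode_iff.1 ((nat_mul.comp (const 2) .id).of_eq fun _ => rfl)

theorem int_natAbs : Primrec Int.natAbs :=
  (nat_div.comp (succ.comp .encode) (const 2)).of_eq fun z => (Int.natAbs_eq_encode z).symm

theorem rat_mem_range_encode : PrimrecPred (· ∈ range (encode : ℚ → ℕ)) :=
  ((nat_lt.comp (const 0) (snd.comp unpair)).and
    (Primrec.eq.comp (nat_gcd.comp (nat_div.comp (succ.comp (fst.comp unpair)) (const 2))
      (snd.comp unpair)) (const 1))).of_eq fun k => (Rat.mem_range_encode_iff k).symm

variable {α : Type*} [Primcodable α]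

theorem rat_of_num_den {f : α → ℚ} (hnum : Primrec fun a => (f a).num)
    (hden : Primrec fun a => (f a).den) : Primrec f := by
  have hraw : Primrec fun a => encode (f a) :=
    (Primrec₂.natPair.comp (Primrec.encode.comp hnum) hden).of_eq fun a => rfl
  -- The `Primcodable ℚ` instance comes from `Denumerable ℚ`: the code of `q` is the number of
  -- raw codes `encode q'` below the raw code `encode q`.
  let := decidableRangeEncode ℚ
  refine encode_iff.1 ((list_length.comp ((listFilter rat_mem_range_encode).comp
    (list_range.comp hraw))).of_eq fun a => List.countP_eq_length_filter.symm)

theorem rat_pow {q : ℚ} (hq : 0 ≤ q) : Primrec fun n : ℕ => q ^ n := by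
  refine rat_of_num_den ((int_natCast.comp (nat_pow.comp (const q.num.natAbs) .id)).of_eq
    fun n => ?_) ((nat_pow.comp (const q.den) .id).of_eq fun n => (Rat.den_pow q n).symm)
  rw [id, Rat.num_pow, Nat.cast_pow, Int.natAbs_of_nonneg (Rat.num_nonneg.2 hq)]

end Primrec

namespace Computable

variable {α : Type*} [Primcodable α]

theorem nat_count {p : ℕ → Prop} [DecidablePred p] (hp : Computable fun k => decide (p k)) :
    Computable (Nat.count p) := by
  refine (nat_rec (f := id) (g := fun _ => 0) .id (const 0)
    (Primrec.nat_add.to_comp.comp (snd.comp snd)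
      (cond (hp.comp (fst.comp snd)) (const 1) (const 0))).to₂).of_eq fun n => ?_
  induction n with
  | zero => rfl
  | succ n ih => simp [Nat.count_succ, ← ih]

theorem decide_forall_lt {p : α → ℕ → Prop} [∀ a, DecidablePred (p a)]
    (hp : Computable₂ fun a k => decide (p a k)) {f : α → ℕ} (hf : Computable f) :
    Computable fun a => decide (∀ k < f a, p a k) := by
  refine (nat_rec hf (const true)
    (Primrec.and.to_comp.comp (snd.comp snd) (hp.comp fst (fst.comp snd))).to₂).of_eq fun a => ?_
  induction f a with
  | zero => simp
  | succ n ih =>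
    simp only at ih ⊢
    rw [ih, ← Bool.decide_and]
    exact decide_eq_decide.2 Nat.forall_lt_succ_right.symm

end Computable

theorem prefixOf_length (ω : ℕ → Bool) (n : ℕ) : (prefixOf ω n).length = n := by
  simp [prefixOf]

theorem prefixOf_succ (ω : ℕ → Bool) (n : ℕ) :
    prefixOf ω (n + 1) = prefixOf ω n ++ [ω n] := by
  rw [prefixOf, List.ofFn_succ']
  simp [prefixOf]

theorem prefixOf_getD (ω : ℕ → Bool) {k n : ℕ} (h : k < n) (d : Bool) :
    (prefixOf ω n).getD k d = ω k := by
  simp [prefixOf, List.getD_eq_getElem?_getD, h]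

theorem pexp_le_uexp {a b p : ℝ} (hp : p ∈ Icc a b) (f : Bool → ℝ) :
    pexp p f ≤ uexp a b f :=
  le_csSup ((isCompact_Icc.image (by unfold pexp; fun_prop)).bddAbove) ⟨p, hp, rfl⟩

theorem uexp_nonpos {a b : ℝ} {f : Bool → ℝ} (h : ∀ p ∈ Icc a b, pexp p f ≤ 0) :
    uexp a b f ≤ 0 :=
  Real.sSup_nonpos <| forall_mem_image.2 h

theorem IsSupermartingale.append_le_of_vacuous {M : List Bool → ℝ}
    (hM : IsSupermartingale (fun _ => 0) (fun _ => 1) M) (s : List Bool) (x : Bool) :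
    M (s ++ [x]) ≤ M s := by
  have := (pexp_le_uexp (p := if x then 1 else 0) (by cases x <;> simp) _).trans (hM s)
  cases x <;> simp [pexp] at this <;> linarith

theorem computablyRandom_vacuous (ω : ℕ → Bool) :
    ComputablyRandom (fun _ => 0) (fun _ => 1) ω := by
  rintro T ⟨hT0, -, hT⟩ -
  refine ⟨1, fun n => ?_⟩
  induction n with
  | zero => simp [prefixOf, hT0]
  | succ n ih => exact (prefixOf_succ ω n ▸ hT.append_le_of_vacuous _ _).trans ih

theorem computableProcess_ratCast {F : List Bool → ℚ} (hF : Computable F) :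
    ComputableProcess fun s => (F s : ℝ) :=
  ⟨fun s _ => F s, fun _ _ => 0, hF.comp .fst, .const 0, fun _ _ _ _ => by simp⟩

section SelectionBet

variable (σ : ℕ → Bool) (t : Bool) (q : ℚ)

/-- The capital of a gambler who starts with `1` and, at each position selected by `σ`,
stakes everything on the outcome `t`, multiplying the capital by `q` when it occurs. -/
def selectionBet (s : List Bool) : ℚ :=
  if ∀ k < s.length, σ k → s.getD k false = t then q ^ Nat.count (σ ·) s.length else 0

variable {σ t q}

theorem selectionBet_nonneg (hq : 0 ≤ q) (s : List Bool) : 0 ≤ selectionBet σ t q s := by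
  unfold selectionBet
  split_ifs <;> positivity

theorem selectionBet_append (s : List Bool) (x : Bool) :
    selectionBet σ t q (s ++ [x]) =
      if σ s.length then (if x = t then selectionBet σ t q s * q else 0)
      else selectionBet σ t q s := by
  have hagree : (∀ k < s.length + 1, σ k → (s ++ [x]).getD k false = t) ↔
      (∀ k < s.length, σ k → s.getD k false = t) ∧ (σ s.length → x = t) := by
    rw [Nat.forall_lt_succ_right]
    exact and_congr (forall₂_congr fun k hk => by rw [List.getD_append _ _ _ _ hk]) (by simp)
  simp only [selectionBet, List.length_append, List.length_singleton, hagree, Nat.count_succ]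
  cases σ s.length <;> by_cases hx : x = t <;> simp [hx, pow_succ]

theorem selectionBet_prefixOf {ω : ℕ → Bool} (hsel : ∀ k, σ k → ω k = t) (n : ℕ) :
    selectionBet σ t q (prefixOf ω n) = q ^ Nat.count (σ ·) n := by
  rw [selectionBet, prefixOf_length,
    if_pos fun k hk hσk => (prefixOf_getD ω hk _).trans (hsel k hσk)]

theorem computable_selectionBet (hσ : Computable σ) (hq : 0 ≤ q) :
    Computable (selectionBet σ t q) := by
  have hstep : Computable₂ fun (s : List Bool) k => decide (σ k → s.getD k false = t) :=
    (Primrec.or.to_comp.comp (Primrec.not.to_comp.comp (hσ.comp .snd))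
      (Primrec.beq.to_comp.comp ((Primrec.list_getD false).to_comp.comp .fst .snd)
        (.const t))).of_eq fun p => by cases h : σ p.2 <;> simp [h, Bool.beq_eq_decide_eq]
  have hcount : Computable (Nat.count (σ ·)) := Computable.nat_count (by simpa using hσ)
  refine (Computable.cond (Computable.decide_forall_lt hstep .list_length)
    ((Primrec.rat_pow hq).to_comp.comp (hcount.comp .list_length)) (.const 0)).of_eq fun s => ?_
  simp only [selectionBet, Bool.cond_decide]

theorem isSupermartingale_selectionBet {a b : ℝ} (hq : 0 ≤ q)
    (hbet : ∀ p ∈ Icc a b, q * (if t then p else 1 - p) ≤ 1) :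
    IsSupermartingale (fun _ => a) (fun _ => b) fun s => (selectionBet σ t q s : ℝ) := by
  intro s
  refine uexp_nonpos fun p hp => ?_
  have hB : (0 : ℝ) ≤ selectionBet σ t q s := by exact_mod_cast selectionBet_nonneg hq s
  simp only [pexp, selectionBet_append]
  cases σ s.length
  · simp
  · calc _ = (selectionBet σ t q s : ℝ) * (q * (if t then p else 1 - p) - 1) := by
          cases t <;> simp <;> ring
      _ ≤ 0 := mul_nonpos_of_nonneg_of_nonpos hB (by linarith [hbet p hp])

end SelectionBet

theorem exists_rat_one_lt_mul_le_one {u : ℝ} (hu : u < 1) : ∃ q : ℚ, 1 < q ∧ q * u ≤ 1 := by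
  rcases le_or_gt u 0 with hu0 | hu0
  · exact ⟨2, by norm_num, by push_cast; linarith⟩
  · obtain ⟨q, h1, h2⟩ := exists_rat_btwn ((one_lt_div hu0).2 hu)
    exact ⟨q, by exact_mod_cast h1, ((lt_div_iff₀ hu0).1 h2).le⟩

theorem not_computablyRandom_of_selection {a b : ℝ} {ω σ : ℕ → Bool} {t : Bool}
    (hσ : Computable σ) (hinf : ∀ n, ∃ k, n ≤ k ∧ σ k) (hsel : ∀ k, σ k → ω k = t)
    (hu : (if t then b else 1 - a) < 1) :
    ¬ ComputablyRandom (fun _ => a) (fun _ => b) ω := by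
  intro hR
  obtain ⟨q, hq1, hqu⟩ := exists_rat_one_lt_mul_le_one hu
  have hq : (0 : ℚ) ≤ q := by positivity
  have hbet : ∀ p ∈ Icc a b, q * (if t then p else 1 - p) ≤ 1 := fun p hp =>
    le_trans (mul_le_mul_of_nonneg_left (by cases t <;> simp <;> linarith [hp.1, hp.2])
      (by exact_mod_cast hq)) hqu
  obtain ⟨B, hB⟩ := hR _
    ⟨by simp [selectionBet], fun s => by exact_mod_cast selectionBet_nonneg hq s,
      isSupermartingale_selectionBet hq hbet⟩
    (computableProcess_ratCast (computable_selectionBet hσ hq))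
  have hcount := Nat.count_nth_of_infinite
    (Nat.frequently_atTop_iff_infinite.1 (Filter.frequently_atTop.2 hinf))
  obtain ⟨j, hj⟩ := pow_unbounded_of_one_lt B (by exact_mod_cast hq1 : (1 : ℝ) < q)
  have := hB (Nat.nth (σ ·) j)
  rw [selectionBet_prefixOf hsel, hcount] at this
  push_cast at this
  linarith

theorem stmt16_general (ω : ℕ → Bool) (hcomp : Computable ω)
    (hones : ∀ n : ℕ, ∃ m : ℕ, n ≤ m ∧ ω m = true)
    (hzeroes : ∀ n : ℕ, ∃ m : ℕ, n ≤ m ∧ ω m = false)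
    (a b : ℝ) (h0 : 0 ≤ a) (h1 : b ≤ 1) :
    ComputablyRandom (fun _ => a) (fun _ => b) ω ↔ (a = 0 ∧ b = 1) := by
  refine ⟨fun hR => ?_, fun ⟨ha, hb⟩ => ha ▸ hb ▸ computablyRandom_vacuous ω⟩
  by_contra hne
  rcases (show 0 < a ∨ b < 1 by contrapose! hne; exact ⟨by linarith, by linarith⟩) with ha | hb
  · exact not_computablyRandom_of_selection (t := false) (Primrec.not.to_comp.comp hcomp)
      (by simpa using hzeroes) (by simp) (by simpa using ha) hR
  · exact not_computablyRandom_of_selection (t := true) hcomp hones (fun _ h => h)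
      (by simpa using hb) hR

/-- If `ω` is a computable infinite binary sequence with infinitely many zeroes and
infinitely many ones, then the only interval forecast `I = [a,b] ⊆ [0,1]` whose
stationary forecasting system `Γ_I` makes `ω` computably random is `I = [0,1]`. -/
theorem stmt16 (ω : ℕ → Bool) (hcomp : Computable ω)
    (hones : ∀ n : ℕ, ∃ m : ℕ, n ≤ m ∧ ω m = true)
    (hzeroes : ∀ n : ℕ, ∃ m : ℕ, n ≤ m ∧ ω m = false)
    (a b : ℝ) (h0 : 0 ≤ a) (hab : a ≤ b) (h1 : b ≤ 1) :
    ComputablyRandom (fun _ => a) (fun _ => b) ω ↔ (a = 0 ∧ b = 1) :=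
  stmt16_general ω hcomp hones hzeroes a b h0 h1
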